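/- For every α ∈ (0, 1/2] there exists a constant C > 0 such that for every α-weight-balanced binary search tree S with n ≥ 1 nodes, writing Postorder(S) = (x_1,...,x_n), it holds that Σ_{i=2}^{n} log₂(|r(x_i) − r(x_{i−1})| + 1) ≤ C·n, where r(x) is the rank of x among the keys of S (the number of keys of S that are ≤ x). -/
import Mathlib


/-- Binary trees with keys at internal nodes. -/
inductive BT (α : Type) where
  | leaf : BT α
  | node : BT α → α → BT α → BT α
deriving DecidableEq

namespace BT

variable {α : Type} [LinearOrder α]

/-- The list of keys of a tree, in symmetric (inorder) order. -/
def keys : BT α → List α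
  | leaf => []
  | node l v r => keys l ++ v :: keys r

/-- The number of nodes of a tree. -/
def size : BT α → ℕ
  | leaf => 0
  | node l _ r => size l + size r + 1

/-- The symmetric-order (binary search tree) property. -/
def IsBST : BT α → Prop
  | leaf => True
  | node l v r => (∀ x ∈ l.keys, x < v) ∧ (∀ x ∈ r.keys, v < x) ∧ l.IsBST ∧ r.IsBST

/-- Preorder of a binary tree: root, then left subtree, then right subtree. -/
def preorder : BT α → List α
  | leaf => []
  | node l v r => v :: (preorder l ++ preorder r)

/-- Postorder of a binary tree: left subtree, right subtree, then root. -/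
def postorder : BT α → List α
  | leaf => []
  | node l v r => postorder l ++ postorder r ++ [v]

/-- Reversed preorder: root, then right subtree, then left subtree
(the preorder of the mirror image). -/
def revPreorder : BT α → List α
  | leaf => []
  | node l v r => v :: (revPreorder r ++ revPreorder l)

/-- Standard leaf insertion into a binary search tree. -/
def insertKey : BT α → α → BT α
  | leaf, x => node leaf x leaf
  | node l v r, x =>
    if x < v then node (insertKey l x) v r
    else if v < x then node l v (insertKey r x)
    else node l v r

/-- The depth (number of edges from the root) of the node with key `x`,
located by binary search. -/
def depthOf : BT α → α → ℕ
  | leaf, _ => 0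
  | node l v r, x =>
    if x < v then depthOf l x + 1
    else if v < x then depthOf r x + 1
    else 0

/-- The search path to the key `x`: `false` records a step to a left child,
`true` a step to a right child. -/
def pathTo : BT α → α → List Bool
  | leaf, _ => []
  | node l v r, x =>
    if x < v then false :: pathTo l x
    else if v < x then true :: pathTo r x
    else []

/-- The left-depth of the node with key `x`: the number of left-child edges
on the path from the root to it. -/
def leftDepthKey : BT α → α → ℕ
  | leaf, _ => 0
  | node l v r, x =>
    if x < v then leftDepthKey l x + 1
    else if v < x then leftDepthKey r x
    else 0

/-- The subtree rooted at the node with key `x` (empty if `x` is absent). -/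
def subtreeAt : BT α → α → BT α
  | leaf, _ => leaf
  | node l v r, x =>
    if x < v then subtreeAt l x
    else if v < x then subtreeAt r x
    else node l v r

/-- The key at the root, if any. -/
def rootKey : BT α → Option α
  | leaf => none
  | node _ v _ => some v

/-- The key of the parent of the node with key `x`, if any. -/
def parentKey : BT α → α → Option α
  | leaf, _ => none
  | node l v r, x =>
    if x < v then (if l.rootKey = some x then some v else l.parentKey x)
    else if v < x then (if r.rootKey = some x then some v else r.parentKey x)
    else none

/-- A step of the context (zipper) describing the search path from the root
to the current subtree: `inL v r` means the current subtree is the left child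
of a node with key `v` and right subtree `r`; `inR l v` means it is the right
child of a node with key `v` and left subtree `l`. -/
inductive Ctx (α : Type) where
  | inL : α → BT α → Ctx α
  | inR : BT α → α → Ctx α

/-- Descend along the search path for `x`, recording the context.
The head of the returned list corresponds to the immediate parent. -/
def descend : BT α → α → List (Ctx α) → List (Ctx α) × BT α
  | leaf, _, acc => (acc, leaf)
  | node l v r, x, acc =>
    if x < v then descend l x (Ctx.inL v r :: acc)
    else if v < x then descend r x (Ctx.inR l v :: acc)
    else (acc, node l v r)

/-- Reattach a subtree into its context, with no rotations. -/
def rebuild : BT α → List (Ctx α) → BT α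
  | t, [] => t
  | t, Ctx.inL v r :: cs => rebuild (node t v r) cs
  | t, Ctx.inR l v :: cs => rebuild (node l v t) cs

/-- Bottom-up splay steps: repeatedly apply zig / zig-zig / zig-zag steps to
the current subtree (rooted at the node being splayed) until the context is
exhausted. -/
def splayLoop : BT α → List (Ctx α) → BT α
  | t, [] => t
  | node a x b, [Ctx.inL v r] => node a x (node b v r)          -- zig
  | node a x b, [Ctx.inR l v] => node (node l v a) x b          -- zig
  | node a x b, Ctx.inL p pr :: Ctx.inL g gr :: cs =>           -- zig-zig
      splayLoop (node a x (node b p (node pr g gr))) cs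
  | node a x b, Ctx.inL p pr :: Ctx.inR gl g :: cs =>           -- zig-zag
      splayLoop (node (node gl g a) x (node b p pr)) cs
  | node a x b, Ctx.inR pl p :: Ctx.inR gl g :: cs =>           -- zig-zig
      splayLoop (node (node (node gl g pl) p a) x b) cs
  | node a x b, Ctx.inR pl p :: Ctx.inL g gr :: cs =>           -- zig-zag
      splayLoop (node (node pl p a) x (node b g gr)) cs
  | leaf, cs => rebuild leaf cs   -- unreachable when the splayed key is present

/-- Splaying the key `x`: if `x` occurs in the tree, bring its node to the
root by bottom-up splay steps; otherwise leave the tree unchanged. -/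
def splay (x : α) (t : BT α) : BT α :=
  match descend t x [] with
  | (_, leaf) => t
  | (cs, found) => splayLoop found cs

/-- `α`-weight-balance in the sense of Nievergelt–Reingold:
at each node, `min(|L|,|R|) + 1 ≥ α * (|x| + 1)`. -/
def WeightBalanced (a : ℝ) : BT α → Prop
  | leaf => True
  | node l _ r =>
      (min l.size r.size + 1 : ℝ) ≥ a * ((l.size + r.size + 1 : ℕ) + 1 : ℝ) ∧
      WeightBalanced a l ∧ WeightBalanced a r

/-- The rank of `x` in `t`: the number of keys of `t` that are `≤ x`. -/
def rank (t : BT α) (x : α) : ℕ := (t.keys.filter (fun y => y ≤ x)).length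

end BT

section Defs

variable {α : Type} [LinearOrder α]

/-- The insertion tree of a sequence: leaf-insert the keys in order. -/
def bstOf (π : List α) : BT α := π.foldl BT.insertKey BT.leaf

/-- `q` is a sub-root: a node of `t` not yet touched whose parent is touched,
where `touched` is the list of touched keys. -/
def IsSubRoot (t : BT α) (touched : List α) (q : α) : Prop :=
  q ∈ t.keys ∧ q ∉ touched ∧ ∃ p, t.parentKey q = some p ∧ p ∈ touched

/-- π avoids the pattern (2,3,1). -/
def Avoids231 (π : List α) : Prop :=
  ¬ ∃ i j k : Fin π.length, i < j ∧ j < k ∧ π.get k < π.get i ∧ π.get i < π.get j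

/-- π avoids the pattern (3,1,2). -/
def Avoids312 (π : List α) : Prop :=
  ¬ ∃ i j k : Fin π.length, i < j ∧ j < k ∧ π.get j < π.get k ∧ π.get k < π.get i

/-- π avoids the pattern (2,1,3). -/
def Avoids213 (π : List α) : Prop :=
  ¬ ∃ i j k : Fin π.length, i < j ∧ j < k ∧ π.get j < π.get i ∧ π.get i < π.get k

/-- π contains a strictly decreasing subsequence of length `k`. -/
def HasDecreasingSubseq (π : List α) (k : ℕ) : Prop :=
  ∃ s : List α, s.Sublist π ∧ s.length = k ∧ s.Chain' (· > ·)

/-- Splay the keys of a list in order, starting from `t`. -/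
def splaySeq (π : List α) (t : BT α) : BT α := π.foldl (fun s x => BT.splay x s) t

/-- The cost of splaying a sequence of keys starting from `t`:
each splay costs the current depth of the requested key plus one. -/
def splayCost : BT α → List α → ℕ
  | _, [] => 0
  | t, x :: xs => (t.depthOf x + 1) + splayCost (BT.splay x t) xs

/-- The cost of insertion splaying a sequence of keys starting from `t`:
each key is leaf-inserted, then the new node is splayed, at a cost of
its depth after insertion plus one. -/
def insertSplayCost : BT α → List α → ℕ
  | _, [] => 0
  | t, x :: xs =>
    ((t.insertKey x).depthOf x + 1) + insertSplayCost (BT.splay x (t.insertKey x)) xs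

/-- `DF rk xs` = Σ_{i≥2} log₂(|rk(x_i) − rk(x_{i−1})| + 1). -/
noncomputable def DF (rk : α → ℕ) (xs : List α) : ℝ :=
  ((xs.zip xs.tail).map
    (fun p => Real.logb 2 (|(rk p.2 : ℝ) - (rk p.1 : ℝ)| + 1))).sum

/-- The rank of `x` within the sequence `σ` itself. -/
def rankIn (σ : List α) (x : α) : ℕ := (σ.filter (fun y => y ≤ x)).length

/-- The dynamic-finger sum of a sequence, with ranks computed in the
sequence itself. -/
noncomputable def DFseq (σ : List α) : ℝ := DF (rankIn σ) σ

end Defs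

section Aux

variable {β : Type} [LinearOrder β]

private lemma DF_nil' (rk : β → ℕ) : DF rk ([] : List β) = 0 := by simp [DF]

private lemma DF_single (rk : β → ℕ) (x : β) : DF rk [x] = 0 := by simp [DF]

private lemma DF_cons_cons (rk : β → ℕ) (x y : β) (l : List β) :
    DF rk (x :: y :: l) =
      Real.logb 2 (|(rk y : ℝ) - (rk x : ℝ)| + 1) + DF rk (y :: l) := by
  simp [DF]

private lemma term_nonneg (u : ℝ) : 0 ≤ Real.logb 2 (|u| + 1) :=
  Real.logb_nonneg one_lt_two (by nlinarith [abs_nonneg u])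

private lemma DF_nonneg (rk : β → ℕ) : ∀ l : List β, 0 ≤ DF rk l
  | [] => by simp [DF]
  | [x] => by simp [DF]
  | x :: y :: l => by
      rw [DF_cons_cons]
      have h1 := DF_nonneg rk (y :: l)
      have h2 := term_nonneg ((rk y : ℝ) - rk x)
      linarith

private lemma DF_append (rk : β → ℕ) (B : ℝ) (hB : 0 ≤ B) :
    ∀ (xs ys : List β),
      (∀ x ∈ xs, ∀ y ∈ ys, Real.logb 2 (|(rk y : ℝ) - rk x| + 1) ≤ B) →
      DF rk (xs ++ ys) ≤ DF rk xs + DF rk ys + B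
  | [], ys, _ => by
      simp only [List.nil_append, DF_nil']
      linarith
  | [x], ys, h => by
      cases ys with
      | nil => simp only [List.append_nil, DF_single, DF_nil']; linarith
      | cons y ys' =>
          have he : ([x] ++ (y :: ys')) = x :: y :: ys' := rfl
          rw [he, DF_cons_cons, DF_single]
          have ht := h x (by simp) y (by simp)
          linarith
  | x1 :: x2 :: xs', ys, h => by
      have hrec := DF_append rk B hB (x2 :: xs') ys
        (fun x hx y hy => h x (by simp at hx ⊢; tauto) y hy)
      have he1 : ((x1 :: x2 :: xs') ++ ys) = x1 :: x2 :: (xs' ++ ys) := rfl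
      rw [he1, DF_cons_cons, DF_cons_cons]
      have he2 : (x2 :: xs') ++ ys = x2 :: (xs' ++ ys) := rfl
      rw [he2] at hrec
      linarith

private lemma mem_postorder {x : β} : ∀ {t : BT β}, x ∈ t.postorder ↔ x ∈ t.keys
  | BT.leaf => by simp [BT.postorder, BT.keys]
  | BT.node l v r => by
      simp [BT.postorder, BT.keys, @mem_postorder x l, @mem_postorder x r]
      tauto

private lemma length_keys : ∀ t : BT β, t.keys.length = t.size
  | BT.leaf => by simp [BT.keys, BT.size]
  | BT.node l v r => by
      simp [BT.keys, BT.size, length_keys l, length_keys r]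
      omega

private lemma rank_le_size (t : BT β) (x : β) : t.rank x ≤ t.size := by
  rw [← length_keys]
  exact List.length_filter_le _ _

private lemma one_le_rank {t : BT β} {x : β} (hx : x ∈ t.keys) : 1 ≤ t.rank x := by
  have hm : x ∈ t.keys.filter (fun y => y ≤ x) :=
    List.mem_filter.2 ⟨hx, by simp⟩
  exact List.length_pos_of_mem hm

private lemma rank_node_left {l r : BT β} {v x : β}
    (hlv : ∀ y ∈ l.keys, y < v) (hvr : ∀ y ∈ r.keys, v < y)
    (hx : x ∈ l.keys) : (BT.node l v r).rank x = l.rank x := by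
  have hxv : x < v := hlv x hx
  unfold BT.rank
  simp only [BT.keys, List.filter_append, List.length_append, List.filter_cons]
  have h1 : ¬ (v ≤ x) := not_le.2 hxv
  have h2 : (r.keys.filter (fun y => decide (y ≤ x))) = [] := by
    rw [List.filter_eq_nil_iff]
    intro y hy
    simp only [decide_eq_true_eq]
    exact not_le.2 (lt_trans hxv (hvr y hy))
  simp [h1, h2]

private lemma rank_node_right {l r : BT β} {v x : β}
    (hlv : ∀ y ∈ l.keys, y < v) (hvr : ∀ y ∈ r.keys, v < y)
    (hx : x ∈ r.keys) : (BT.node l v r).rank x = r.rank x + (l.size + 1) := by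
  have hvx : v < x := hvr x hx
  unfold BT.rank
  simp only [BT.keys, List.filter_append, List.length_append, List.filter_cons]
  have h1 : v ≤ x := le_of_lt hvx
  have h2 : (l.keys.filter (fun y => decide (y ≤ x))) = l.keys := by
    rw [List.filter_eq_self]
    intro y hy
    simp only [decide_eq_true_eq]
    exact le_of_lt (lt_trans (hlv y hy) hvx)
  simp [h1, h2, length_keys]
  omega

private lemma term_le {t : BT β} {rk : β → ℕ} {c : ℕ}
    (hrk : ∀ x ∈ t.keys, rk x = t.rank x + c)
    {x y : β} (hx : x ∈ t.keys) (hy : y ∈ t.keys) :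
    Real.logb 2 (|(rk y : ℝ) - rk x| + 1) ≤ Real.logb 2 ((t.size : ℝ) + 1) := by
  have h1 := one_le_rank hx
  have h2 := one_le_rank hy
  have h3 := rank_le_size t x
  have h4 := rank_le_size t y
  have habs : |(rk y : ℝ) - rk x| + 1 ≤ (t.size : ℝ) + 1 := by
    rw [hrk x hx, hrk y hy]
    have hc1 : (1:ℝ) ≤ (t.rank x : ℝ) := by exact_mod_cast h1
    have hc2 : (1:ℝ) ≤ (t.rank y : ℝ) := by exact_mod_cast h2
    have hc3 : ((t.rank x : ℕ) : ℝ) ≤ t.size := by exact_mod_cast h3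
    have hc4 : ((t.rank y : ℕ) : ℝ) ≤ t.size := by exact_mod_cast h4
    push_cast
    have he : ((t.rank y : ℝ) + c) - ((t.rank x : ℝ) + c) = (t.rank y : ℝ) - t.rank x := by
      ring
    rw [he]
    have habs2 : |(t.rank y : ℝ) - t.rank x| ≤ (t.size : ℝ) :=
      abs_le.mpr ⟨by linarith, by linarith⟩
    linarith
  have hpos : (0:ℝ) < |(rk y : ℝ) - rk x| + 1 := by positivity
  exact Real.logb_le_logb_of_le one_lt_two hpos habs

private lemma main_ind {a : ℝ} (ha0 : 0 < a) (ha : a ≤ 1 / 2) :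
    ∀ (T : BT β), T.IsBST → BT.WeightBalanced a T →
      ∀ (rk : β → ℕ) (c : ℕ), (∀ x ∈ T.keys, rk x = T.rank x + c) →
        DF rk T.postorder ≤
          (4 * Real.logb 2 (1 / a)) * T.size - 2 * Real.logb 2 ((T.size : ℝ) + 1)
  | BT.leaf, _, _, rk, c, _ => by
      simp [BT.postorder, BT.size, DF]
  | BT.node l v r, hbst, hwb, rk, c, hrk => by
      obtain ⟨hlv, hvr, hbl, hbr⟩ := hbst
      obtain ⟨hbal, hwl, hwr⟩ := hwb
      have hkeysl : ∀ x ∈ l.keys, x ∈ (BT.node l v r).keys := by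
        intro x hx; simp [BT.keys]; tauto
      have hkeysr : ∀ x ∈ r.keys, x ∈ (BT.node l v r).keys := by
        intro x hx; simp [BT.keys]; tauto
      have hkeysv : v ∈ (BT.node l v r).keys := by simp [BT.keys]
      have ihl := main_ind ha0 ha l hbl hwl rk c
        (fun x hx => by rw [hrk x (hkeysl x hx), rank_node_left hlv hvr hx])
      have ihr := main_ind ha0 ha r hbr hwr rk (c + (l.size + 1))
        (fun x hx => by rw [hrk x (hkeysr x hx), rank_node_right hlv hvr hx]; omega)
      have hnval : (BT.node l v r).size = l.size + r.size + 1 := rfl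
      set B := Real.logb 2 (((BT.node l v r).size : ℝ) + 1) with hBdef
      have hB0 : 0 ≤ B := Real.logb_nonneg one_lt_two
        (by have : (0:ℝ) ≤ (((BT.node l v r).size : ℕ) : ℝ) := Nat.cast_nonneg _; linarith)
      have hpost : (BT.node l v r).postorder = l.postorder ++ (r.postorder ++ [v]) := by
        simp [BT.postorder]
      have hbound : ∀ x ∈ (BT.node l v r).keys, ∀ y ∈ (BT.node l v r).keys,
          Real.logb 2 (|(rk y : ℝ) - rk x| + 1) ≤ B :=
        fun x hx y hy => term_le hrk hx hy
      have happ2 : DF rk (r.postorder ++ [v]) ≤ DF rk r.postorder + DF rk [v] + B :=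
        DF_append rk B hB0 r.postorder [v] (by
          intro x hx y hy
          simp only [List.mem_singleton] at hy
          have hb := hbound x (hkeysr x (mem_postorder.mp hx)) v hkeysv
          rw [hy]
          exact hb)
      have happ1 : DF rk (l.postorder ++ (r.postorder ++ [v])) ≤
          DF rk l.postorder + DF rk (r.postorder ++ [v]) + B :=
        DF_append rk B hB0 l.postorder (r.postorder ++ [v]) (by
          intro x hx y hy
          have hx' := hkeysl x (mem_postorder.mp hx)
          have hy' : y ∈ (BT.node l v r).keys := by
            rcases List.mem_append.mp hy with h | h
            · exact hkeysr y (mem_postorder.mp h)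
            · simp only [List.mem_singleton] at h; subst h; exact hkeysv
          exact hbound x hx' y hy')
      -- balance facts
      have hn1pos : (0:ℝ) < ((BT.node l v r).size : ℝ) + 1 := by positivity
      have hp1 : (l.size : ℝ) + 1 ≥ a * (((BT.node l v r).size : ℝ) + 1) := by
        have hm := min_le_left (l.size : ℝ) (r.size : ℝ)
        rw [hnval]
        push_cast at hbal ⊢
        linarith
      have hq1 : (r.size : ℝ) + 1 ≥ a * (((BT.node l v r).size : ℝ) + 1) := by
        have hm := min_le_right (l.size : ℝ) (r.size : ℝ)
        rw [hnval]
        push_cast at hbal ⊢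
        linarith
      have hlogfact : ∀ m : ℕ, (m : ℝ) + 1 ≥ a * (((BT.node l v r).size : ℝ) + 1) →
          Real.logb 2 a + B ≤ Real.logb 2 ((m : ℝ) + 1) := by
        intro m hm
        have hmul : Real.logb 2 (a * (((BT.node l v r).size : ℝ) + 1)) =
            Real.logb 2 a + B := by
          rw [hBdef, ← Real.logb_mul (ne_of_gt ha0) (ne_of_gt hn1pos)]
        rw [← hmul]
        exact Real.logb_le_logb_of_le one_lt_two (mul_pos ha0 hn1pos) hm
      have hLp := hlogfact l.size hp1
      have hLq := hlogfact r.size hq1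
      have hinv : Real.logb 2 (1 / a) = - Real.logb 2 a := by
        rw [one_div, Real.logb_inv]
      rw [hpost]
      have hsz : ((BT.node l v r).size : ℝ) = (l.size : ℝ) + (r.size : ℝ) + 1 := by
        rw [hnval]; push_cast; ring
      rw [DF_single] at happ2
      calc DF rk (l.postorder ++ (r.postorder ++ [v]))
          ≤ DF rk l.postorder + DF rk (r.postorder ++ [v]) + B := happ1
        _ ≤ DF rk l.postorder + (DF rk r.postorder + 0 + B) + B := by linarith
        _ ≤ (4 * Real.logb 2 (1 / a)) * ((BT.node l v r).size : ℝ)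
            - 2 * Real.logb 2 (((BT.node l v r).size : ℝ) + 1) := by
            have hBval : B = Real.logb 2 ((l.size : ℝ) + (r.size : ℝ) + 1 + 1) := by
              rw [hBdef, hnval]; push_cast; ring_nf
            rw [hinv] at ihl ihr
            rw [hsz, hinv]
            linarith [ihl, ihr, hLp, hLq, hBval]

end Aux

/-- For every α ∈ (0,1/2] there is a constant `C > 0` such that for every
α-weight-balanced binary search tree `S` with at least one node, the
dynamic-finger sum of `Postorder(S)` (with ranks in `S`) is at most `C·|S|`. -/
theorem df_postorder_balanced {a : ℝ} (ha0 : 0 < a) (ha : a ≤ 1 / 2) :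
    ∃ C : ℝ, 0 < C ∧
      ∀ (β : Type) (_ : LinearOrder β) (S : BT β), S.IsBST →
        BT.WeightBalanced a S → 1 ≤ S.size →
        DF (S.rank) S.postorder ≤ C * S.size := by
  refine ⟨4 * Real.logb 2 (1 / a), ?_, ?_⟩
  · have h2 : (2:ℝ) ≤ 1 / a := by
      rw [le_div_iff₀ ha0]; linarith
    have := Real.logb_pos one_lt_two (by linarith : (1:ℝ) < 1 / a)
    linarith
  · intro β instβ S hbst hwb _
    have h := main_ind ha0 ha S hbst hwb S.rank 0 (fun x _ => by omega)
    have hL : 0 ≤ Real.logb 2 ((S.size : ℝ) + 1) :=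
      Real.logb_nonneg one_lt_two
        (by have : (0:ℝ) ≤ (S.size : ℝ) := Nat.cast_nonneg _; linarith)
    linarith
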